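/- arXiv:1506.00030 — 7 statements merged into one kernel-verified Lean document; each statement's English description precedes it below -/
import Mathlib

section
/- Let Θ̇⋆ > 0, m > 0, and suppose (L, φ) : [0,T) → ℝ² is a C¹ solution of L' = -τL² - (1/2)Θ̇⋆φ, φ' = -3τLφ with L(0) = 1/2, φ(0) = 2m. Then for all τ ∈ [0,T) with τ ≥ 0: L(τ) ≥ φ(τ)·(1/(4m) - (1/2)Θ̇⋆τ). -/
/-!
Since `φ' = -3τLφ` is linear in `φ`, the integrating factor gives
`φ(τ) = 2m · exp(-∫₀^τ 3sL(s) ds) > 0`. Where `φ > 0`, the quantity `L/φ + Θ̇⋆τ/2` has derivative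
`2τL²/φ ≥ 0` (the `Θ̇⋆` terms cancel), so it stays above its initial value `1/(4m)`.
-/

open Set Real

theorem eq_mul_exp_integral_of_hasDerivAt {f a : ℝ → ℝ} {t₀ t₁ : ℝ} (ha : Continuous a)
    (hf : ∀ t ∈ Icc t₀ t₁, HasDerivAt f (a t * f t) t) :
    ∀ t ∈ Icc t₀ t₁, f t = f t₀ * exp (∫ s in t₀..t, a s) := by
  have hderiv : ∀ t ∈ Icc t₀ t₁,
      HasDerivAt (fun t => f t * exp (-∫ s in t₀..t, a s)) 0 t := by
    intro t ht
    refine ((hf t ht).mul (ha.integral_hasStrictDerivAt t₀ t).hasDerivAt.neg.exp).congr_deriv ?_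
    ring
  intro t ht
  have hconst := constant_of_has_deriv_right_zero
    (fun t ht => (hderiv t ht).continuousAt.continuousWithinAt)
    (fun t ht => (hderiv t (Ico_subset_Icc_self ht)).hasDerivWithinAt) t ht
  simp only [intervalIntegral.integral_same, neg_zero, exp_zero, mul_one] at hconst
  rw [← hconst, mul_assoc, ← exp_add, neg_add_cancel, exp_zero, mul_one]

theorem pos_of_hasDerivAt_eq_mul {f a : ℝ → ℝ} {t₀ t₁ : ℝ} (ha : ContinuousOn a (Icc t₀ t₁))
    (hf : ∀ t ∈ Icc t₀ t₁, HasDerivAt f (a t * f t) t) (h₀ : 0 < f t₀) :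
    ∀ t ∈ Icc t₀ t₁, 0 < f t := by
  intro t ht
  have hle : t₀ ≤ t₁ := ht.1.trans ht.2
  have hext : ∀ s ∈ Icc t₀ t₁, IccExtend hle ((Icc t₀ t₁).domRestrict a) s = a s :=
    fun s hs => IccExtend_of_mem hle _ hs
  rw [eq_mul_exp_integral_of_hasDerivAt (f := f) ha.domRestrict.Icc_extend'
    (fun s hs => hext s hs ▸ hf s hs) t ht]
  positivity

theorem hasDerivAt_div_add_of_reduced_core {L φ : ℝ → ℝ} {Θs x : ℝ}
    (hL : HasDerivAt L (-x * L x ^ 2 - Θs * φ x / 2) x)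
    (hφ : HasDerivAt φ (-3 * x * L x * φ x) x) (hφx : φ x ≠ 0) :
    HasDerivAt (fun t => L t / φ t + Θs * t / 2) (2 * x * L x ^ 2 / φ x) x := by
  refine ((hL.div hφ hφx).add (((hasDerivAt_id x).const_mul Θs).div_const 2)).congr_deriv ?_
  field_simp
  ring

theorem monotoneOn_div_add_of_reduced_core {L φ : ℝ → ℝ} {Θs τ : ℝ}
    (hL : ∀ t ∈ Icc 0 τ, HasDerivAt L (-t * L t ^ 2 - Θs * φ t / 2) t)
    (hφ : ∀ t ∈ Icc 0 τ, HasDerivAt φ (-3 * t * L t * φ t) t)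
    (hφpos : ∀ t ∈ Icc 0 τ, 0 < φ t) :
    MonotoneOn (fun t => L t / φ t + Θs * t / 2) (Icc 0 τ) := by
  have hderiv : ∀ t ∈ Icc 0 τ, HasDerivAt (fun t => L t / φ t + Θs * t / 2)
      (2 * t * L t ^ 2 / φ t) t := fun t ht =>
    hasDerivAt_div_add_of_reduced_core (hL t ht) (hφ t ht) (hφpos t ht).ne'
  refine monotoneOn_of_hasDerivWithinAt_nonneg (convex_Icc 0 τ)
    (fun t ht => (hderiv t ht).continuousAt.continuousWithinAt)
    (fun t ht => (hderiv t (interior_subset ht)).hasDerivWithinAt) fun t ht => ?_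
  rw [interior_Icc] at ht
  have := hφpos t (Ioo_subset_Icc_self ht)
  have := ht.1.le
  positivity

theorem reduced_core_L_lower_bound_general (Θs m T : ℝ) (hm : 0 < m)
    (L φ : ℝ → ℝ)
    (hL : ∀ τ ∈ Set.Ico (0 : ℝ) T,
      HasDerivAt L (-τ * (L τ) ^ 2 - Θs * φ τ / 2) τ)
    (hφ : ∀ τ ∈ Set.Ico (0 : ℝ) T,
      HasDerivAt φ (-3 * τ * L τ * φ τ) τ)
    (hL0 : L 0 = 1 / 2) (hφ0 : φ 0 = 2 * m) :
    ∀ τ ∈ Set.Ico (0 : ℝ) T,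
      L τ ≥ φ τ * (1 / (4 * m) - Θs * τ / 2) := by
  rintro τ ⟨hτ₀, hτT⟩
  have hsub : Icc 0 τ ⊆ Ico 0 T := Icc_subset_Ico_right hτT
  have hφpos : ∀ t ∈ Icc 0 τ, 0 < φ t :=
    pos_of_hasDerivAt_eq_mul (a := fun t => -3 * t * L t)
      (fun t ht => (continuousAt_id.const_mul (-3) |>.mul
        (hL t (hsub ht)).continuousAt).continuousWithinAt)
      (fun t ht => hφ t (hsub ht)) (by rw [hφ0]; positivity)
  have hG := monotoneOn_div_add_of_reduced_core (fun t ht => hL t (hsub ht))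
    (fun t ht => hφ t (hsub ht)) hφpos (left_mem_Icc.2 hτ₀) (right_mem_Icc.2 hτ₀) hτ₀
  have hG0 : L 0 / φ 0 = 1 / (4 * m) := by
    rw [hL0, hφ0]
    field_simp
    ring
  simp only [hG0, mul_zero, zero_div, add_zero] at hG
  rw [ge_iff_le, ← le_div_iff₀' (hφpos τ (right_mem_Icc.2 hτ₀))]
  linarith

/-- Lower bound for `L` in the reduced (`κ = 0`) core system:
`L(τ) ≥ φ(τ)(1/(4m) - Θ̇⋆τ/2)` for `τ ≥ 0`. -/
theorem reduced_core_L_lower_bound (Θs m T : ℝ) (hΘs : 0 < Θs) (hm : 0 < m)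
    (hT : 0 < T) (L φ : ℝ → ℝ)
    (hL : ∀ τ ∈ Set.Ico (0 : ℝ) T,
      HasDerivAt L (-τ * (L τ) ^ 2 - Θs * φ τ / 2) τ)
    (hφ : ∀ τ ∈ Set.Ico (0 : ℝ) T,
      HasDerivAt φ (-3 * τ * L τ * φ τ) τ)
    (hL0 : L 0 = 1 / 2) (hφ0 : φ 0 = 2 * m) :
    ∀ τ ∈ Set.Ico (0 : ℝ) T,
      L τ ≥ φ τ * (1 / (4 * m) - Θs * τ / 2) :=
  reduced_core_L_lower_bound_general Θs m T hm L φ hL hφ hL0 hφ0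
end

section
/- Let Θ̇⋆ > 0, m > 0, and suppose (L, φ) : [0,T) → ℝ² is a C¹ solution of L' = -τL² - (1/2)Θ̇⋆φ, φ' = -3τLφ with L(0) = 1/2, φ(0) = 2m, and suppose L(τ) > 0 on [0,T). Then L(τ) ≤ 2/(τ² + 4) for all τ ∈ [0,T). -/
/-!
Since `φ` solves the linear equation `φ' = -3τLφ`, it cannot change sign (Grönwall), so
`φ ≥ 0`. Then `L' ≤ -τL²`, i.e. `(1/L - τ²/2)' = Θ̇⋆φ / (2L²) ≥ 0`, and integrating from
`1/L(0) = 2` gives `1/L(τ) ≥ 2 + τ²/2`.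
-/

open Set

theorem eq_zero_of_hasDerivAt_mul_self_of_eq_zero {f g : ℝ → ℝ} {s t : ℝ} (hst : s ≤ t)
    (hg : ContinuousOn g (Icc s t)) (hf : ∀ x ∈ Icc s t, HasDerivAt f (g x * f x) x)
    (hs : f s = 0) : f t = 0 := by
  obtain ⟨C, hC⟩ := isCompact_Icc.exists_bound_of_continuousOn hg
  refine eq_zero_of_abs_deriv_le_mul_abs_self_of_eq_zero_right (K := C)
    (fun x hx => (hf x hx).continuousAt.continuousWithinAt)
    (fun x hx => (hf x (Ico_subset_Icc_self hx)).hasDerivWithinAt) hs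
    (fun x hx => ?_) t ⟨hst, le_rfl⟩
  rw [norm_mul]
  exact mul_le_mul_of_nonneg_right (hC x (Ico_subset_Icc_self hx)) (norm_nonneg _)

theorem nonneg_of_hasDerivAt_mul_self_of_nonneg {f g : ℝ → ℝ} {s t : ℝ} (hst : s ≤ t)
    (hg : ContinuousOn g (Icc s t)) (hf : ∀ x ∈ Icc s t, HasDerivAt f (g x * f x) x)
    (hs : 0 ≤ f s) : 0 ≤ f t := by
  by_contra! ht
  have hfc : ContinuousOn f (Icc s t) := fun x hx => (hf x hx).continuousAt.continuousWithinAt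
  obtain ⟨r, hr, hr0⟩ := intermediate_value_Icc' hst hfc ⟨ht.le, hs⟩
  have hsub : Icc r t ⊆ Icc s t := Icc_subset_Icc_left hr.1
  have := eq_zero_of_hasDerivAt_mul_self_of_eq_zero hr.2 (hg.mono hsub)
    (fun x hx => hf x (hsub hx)) hr0
  linarith

theorem hasDerivAt_inv_sub_sq_div_two {L : ℝ → ℝ} {τ p : ℝ}
    (hL : HasDerivAt L (-τ * L τ ^ 2 - p) τ) (hLτ : L τ ≠ 0) :
    HasDerivAt (fun t => (L t)⁻¹ - t ^ 2 / 2) (p / L τ ^ 2) τ := by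
  have hsq : HasDerivAt (fun t : ℝ => t ^ 2 / 2) τ τ := by
    simpa using (hasDerivAt_pow 2 τ).div_const 2
  refine ((hL.inv hLτ).sub hsq).congr_deriv ?_
  field_simp
  ring

theorem monotoneOn_inv_sub_sq_div_two {L p : ℝ → ℝ} {T : ℝ}
    (hL : ∀ τ ∈ Ico 0 T, HasDerivAt L (-τ * L τ ^ 2 - p τ) τ)
    (hp : ∀ τ ∈ Ico 0 T, 0 ≤ p τ) (hLpos : ∀ τ ∈ Ico 0 T, 0 < L τ) :
    MonotoneOn (fun t => (L t)⁻¹ - t ^ 2 / 2) (Ico 0 T) := by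
  have hderiv τ (hτ : τ ∈ Ico 0 T) := hasDerivAt_inv_sub_sq_div_two (hL τ hτ) (hLpos τ hτ).ne'
  refine monotoneOn_of_hasDerivWithinAt_nonneg (convex_Ico 0 T)
    (fun τ hτ => (hderiv τ hτ).continuousAt.continuousWithinAt)
    (fun τ hτ => (hderiv τ (interior_subset hτ)).hasDerivWithinAt) 
    (fun τ hτ => div_nonneg (hp τ (interior_subset hτ)) (sq_nonneg _))

theorem reduced_core_L_upper_bound_general (Θs m T : ℝ) (hΘs : 0 < Θs) (hm : 0 < m)
    (L φ : ℝ → ℝ)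
    (hL : ∀ τ ∈ Set.Ico (0 : ℝ) T,
      HasDerivAt L (-τ * (L τ) ^ 2 - Θs * φ τ / 2) τ)
    (hφ : ∀ τ ∈ Set.Ico (0 : ℝ) T,
      HasDerivAt φ (-3 * τ * L τ * φ τ) τ)
    (hL0 : L 0 = 1 / 2) (hφ0 : φ 0 = 2 * m)
    (hLpos : ∀ τ ∈ Set.Ico (0 : ℝ) T, 0 < L τ) :
    ∀ τ ∈ Set.Ico (0 : ℝ) T, L τ ≤ 2 / (τ ^ 2 + 4) := by
  have hφnn : ∀ t ∈ Ico 0 T, 0 ≤ φ t := fun t ht =>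
    nonneg_of_hasDerivAt_mul_self_of_nonneg ht.1 (g := fun x => -3 * x * L x)
      ((continuousOn_const.mul continuousOn_id).mul fun x hx =>
        (hL x (Icc_subset_Ico_right ht.2 hx)).continuousAt.continuousWithinAt)
      (fun x hx => hφ x (Icc_subset_Ico_right ht.2 hx)) (by rw [hφ0]; positivity)
  have hmono := monotoneOn_inv_sub_sq_div_two hL
    (fun t ht => by have := hφnn t ht; positivity) hLpos
  intro τ hτ
  have key : 2 + τ ^ 2 / 2 ≤ (L τ)⁻¹ := by
    have := hmono ⟨le_rfl, hτ.1.trans_lt hτ.2⟩ hτ hτ.1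
    norm_num [hL0] at this
    linarith
  calc L τ ≤ (2 + τ ^ 2 / 2)⁻¹ := (le_inv_comm₀ (hLpos τ hτ) (by positivity)).2 key
    _ = 2 / (τ ^ 2 + 4) := by field_simp; ring

/-- Upper bound for `L` in the reduced (`κ = 0`) core system:
if `L > 0` on `[0,T)` then `L(τ) ≤ 2/(τ² + 4)`. -/
theorem reduced_core_L_upper_bound (Θs m T : ℝ) (hΘs : 0 < Θs) (hm : 0 < m)
    (hT : 0 < T) (L φ : ℝ → ℝ)
    (hL : ∀ τ ∈ Set.Ico (0 : ℝ) T,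
      HasDerivAt L (-τ * (L τ) ^ 2 - Θs * φ τ / 2) τ)
    (hφ : ∀ τ ∈ Set.Ico (0 : ℝ) T,
      HasDerivAt φ (-3 * τ * L τ * φ τ) τ)
    (hL0 : L 0 = 1 / 2) (hφ0 : φ 0 = 2 * m)
    (hLpos : ∀ τ ∈ Set.Ico (0 : ℝ) T, 0 < L τ) :
    ∀ τ ∈ Set.Ico (0 : ℝ) T, L τ ≤ 2 / (τ ^ 2 + 4) :=
  reduced_core_L_upper_bound_general Θs m T hΘs hm L φ hL hφ hL0 hφ0 hLpos
end

section
/- Let Θ̇⋆ > 0, m > 0, and suppose (L, φ) solves L' = -τL² - (1/2)Θ̇⋆φ, φ' = -3τLφ with L(0) = 1/2, φ(0) = 2m on [0,T). Then for 0 ≤ τ < min(T, (Θ̇⋆m)^{-1/3}), φ(τ) ≤ 2m/(1 - Θ̇⋆mτ³). In particular φ is bounded on [0, 1/(2(Θ̇⋆m)^{1/3})] ∩ [0,T). -/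
/-!
Positivity of `φ` and the bound `L ≥ φ (1/(4m) - Θ̇⋆τ/2)` both come from linear differential
inequalities `f' ≥ g f` with `f(0) ≥ 0`, solved with the integrating factor `exp (-∫ g)`; the
latter holds because `h := L - φ (1/(4m) - Θ̇⋆τ/2)` satisfies `h(0) = 0` and
`h' = 2τL² - 3τL h`. Since `φ > 0`, this gives `L ≥ -(1/2)Θ̇⋆τφ`, hence
`(1/φ)' = 3τL/φ ≥ -(3/2)Θ̇⋆τ²`, and integrating, `1/φ(τ) ≥ (1 - Θ̇⋆mτ³)/(2m)`.
For `τ ≤ 1/(2(Θ̇⋆m)^{1/3})` we have `Θ̇⋆mτ³ ≤ 1/8`, whence `φ ≤ 16m/7`.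
-/

open Set Real

theorem mul_exp_integral_le_of_mul_le_deriv {f f' g : ℝ → ℝ} {a b : ℝ} (hab : a ≤ b)
    (hf : ContinuousOn f (Icc a b)) (hg : ContinuousOn g (Icc a b))
    (hf' : ∀ t ∈ Ioo a b, HasDerivAt f (f' t) t) (hgf : ∀ t ∈ Ioo a b, g t * f t ≤ f' t) :
    f a * exp (∫ s in a..b, g s) ≤ f b := by
  set G : ℝ → ℝ := fun t => ∫ s in a..t, g s
  have hGc : ContinuousOn G (Icc a b) := by
    simpa [uIcc_of_le hab] using intervalIntegral.continuousOn_primitive_interval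
      (hg.integrableOn_Icc.mono_set (uIcc_of_le hab).subset)
  have hG' : ∀ t ∈ Ioo a b, HasDerivAt G (g t) t := fun t ht =>
    intervalIntegral.integral_hasDerivAt_right
      ((hg.mono (Icc_subset_Icc le_rfl ht.2.le)).intervalIntegrable_of_Icc ht.1.le)
      ((hg.mono Ioo_subset_Icc_self).stronglyMeasurableAtFilter isOpen_Ioo t ht)
      (hg.continuousAt (Icc_mem_nhds ht.1 ht.2))
  have hmono : MonotoneOn (fun t => f t * exp (-G t)) (Icc a b) := by
    refine monotoneOn_of_hasDerivWithinAt_nonneg (f' := fun t => (f' t - g t * f t) * exp (-G t))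
      (convex_Icc a b) (hf.mul hGc.neg.rexp) (fun t ht => ?_) (fun t ht => ?_)
    · rw [interior_Icc] at ht ⊢
      exact ((hf' t ht).mul (hG' t ht).neg.exp).hasDerivWithinAt.congr_deriv
        (by rw [Pi.neg_apply]; ring)
    · rw [interior_Icc] at ht
      exact mul_nonneg (sub_nonneg.2 (hgf t ht)) (exp_pos _).le
  have hab' := hmono (left_mem_Icc.2 hab) (right_mem_Icc.2 hab) hab
  simp only [G, intervalIntegral.integral_same, neg_zero, exp_zero, mul_one] at hab'
  calc f a * exp (G b) ≤ f b * exp (-G b) * exp (G b) := by gcongr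
    _ = f b := by rw [mul_assoc, ← exp_add, neg_add_cancel, exp_zero, mul_one]

theorem continuousOn_Icc_of_hasDerivAt_Ico {f f' : ℝ → ℝ} {a t T : ℝ} (htT : t < T)
    (hf : ∀ τ ∈ Ico a T, HasDerivAt f (f' τ) τ) : ContinuousOn f (Icc a t) :=
  fun τ hτ => (hf τ ⟨hτ.1, hτ.2.trans_lt htT⟩).continuousAt.continuousWithinAt

theorem mul_pow_three_lt_one_of_lt_rpow {c τ : ℝ} (hτ : 0 ≤ τ) (h : τ < c ^ (-(1 : ℝ) / 3)) :
    c * τ ^ 3 < 1 := by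
  rcases le_or_gt c 0 with hc | hc
  · nlinarith [pow_nonneg hτ 3]
  have hcube : (c ^ (-(1 : ℝ) / 3)) ^ 3 = c⁻¹ := by
    rw [← rpow_natCast, ← rpow_mul hc.le]
    norm_num [rpow_neg_one]
  calc c * τ ^ 3 < c * (c ^ (-(1 : ℝ) / 3)) ^ 3 := by gcongr
    _ = 1 := by rw [hcube, mul_inv_cancel₀ hc.ne']

theorem mul_pow_three_le_of_le_one_div_two_mul_rpow {c τ : ℝ} (hτ : 0 ≤ τ)
    (h : τ ≤ 1 / (2 * c ^ ((1 : ℝ) / 3))) : c * τ ^ 3 ≤ 1 / 8 := by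
  rcases le_or_gt c 0 with hc | hc
  · nlinarith [pow_nonneg hτ 3]
  have hcube : (c ^ ((1 : ℝ) / 3)) ^ 3 = c := by
    simpa using rpow_inv_natCast_pow (n := 3) hc.le three_ne_zero
  calc c * τ ^ 3 ≤ c * (1 / (2 * c ^ ((1 : ℝ) / 3))) ^ 3 := by gcongr
    _ = 1 / 8 := by rw [div_pow, mul_pow, hcube]; field_simp; norm_num

section ReducedCore

variable {Θs m T : ℝ} {L φ : ℝ → ℝ}
  (hL : ∀ τ ∈ Ico (0 : ℝ) T, HasDerivAt L (-τ * (L τ) ^ 2 - Θs * φ τ / 2) τ)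
  (hφ : ∀ τ ∈ Ico (0 : ℝ) T, HasDerivAt φ (-3 * τ * L τ * φ τ) τ)
include hL hφ

theorem reducedCore_phi_pos (hm : 0 < m) (hφ0 : φ 0 = 2 * m) {t : ℝ} (ht : 0 ≤ t)
    (htT : t < T) : 0 < φ t := by
  have hg : ContinuousOn (fun τ => -3 * τ * L τ) (Icc 0 t) :=
    (continuousOn_const.mul continuousOn_id).mul (continuousOn_Icc_of_hasDerivAt_Ico htT hL)
  calc 0 < φ 0 * exp (∫ s in (0 : ℝ)..t, -3 * s * L s) := by rw [hφ0]; positivity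
    _ ≤ φ t := mul_exp_integral_le_of_mul_le_deriv ht
      (continuousOn_Icc_of_hasDerivAt_Ico htT hφ) hg
      (fun τ hτ => hφ τ ⟨hτ.1.le, hτ.2.trans htT⟩) (fun τ _ => le_of_eq (by ring))

theorem reducedCore_phi_mul_le_L (hm : 0 < m) (hL0 : L 0 = 1 / 2) (hφ0 : φ 0 = 2 * m)
    {t : ℝ} (ht : 0 ≤ t) (htT : t < T) : φ t * (1 / (4 * m) - Θs * t / 2) ≤ L t := by
  set h : ℝ → ℝ := fun τ => L τ - φ τ * (1 / (4 * m) - Θs * τ / 2)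
  have hh' : ∀ τ ∈ Ico (0 : ℝ) T, HasDerivAt h (2 * τ * L τ ^ 2 - 3 * τ * L τ * h τ) τ := by
    intro τ hτ
    have hc : HasDerivAt (fun τ : ℝ => 1 / (4 * m) - Θs * τ / 2) (-(Θs / 2)) τ := by
      simpa using (((hasDerivAt_id τ).const_mul Θs).div_const 2).const_sub (1 / (4 * m))
    refine ((hL τ hτ).sub ((hφ τ hτ).mul hc)).congr_deriv ?_
    simp only [h]
    ring
  have hg : ContinuousOn (fun τ => -3 * τ * L τ) (Icc 0 t) :=
    (continuousOn_const.mul continuousOn_id).mul (continuousOn_Icc_of_hasDerivAt_Ico htT hL)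
  have hh0 : h 0 = 0 := by simp only [h, hL0, hφ0]; field_simp; ring
  have key := mul_exp_integral_le_of_mul_le_deriv ht
    (continuousOn_Icc_of_hasDerivAt_Ico htT hh') hg
    (fun τ hτ => hh' τ ⟨hτ.1.le, hτ.2.trans htT⟩)
    (fun τ hτ => by nlinarith [mul_nonneg hτ.1.le (sq_nonneg (L τ))])
  rw [hh0, zero_mul] at key
  exact sub_nonneg.1 key

theorem reducedCore_neg_mul_phi_le_L (hm : 0 < m) (hL0 : L 0 = 1 / 2) (hφ0 : φ 0 = 2 * m)
    {t : ℝ} (ht : 0 ≤ t) (htT : t < T) : -(Θs / 2) * t * φ t ≤ L t := by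
  nlinarith [reducedCore_phi_mul_le_L hL hφ hm hL0 hφ0 ht htT,
    mul_pos (reducedCore_phi_pos hL hφ hm hφ0 ht htT) (one_div_pos.2 (mul_pos four_pos hm))]

theorem reducedCore_phi_mul_one_sub_le (hm : 0 < m) (hL0 : L 0 = 1 / 2) (hφ0 : φ 0 = 2 * m)
    {t : ℝ} (ht : 0 ≤ t) (htT : t < T) : φ t * (1 - Θs * m * t ^ 3) ≤ 2 * m := by
  have hpos : ∀ τ ∈ Icc 0 t, 0 < φ τ := fun τ hτ =>
    reducedCore_phi_pos hL hφ hm hφ0 hτ.1 (hτ.2.trans_lt htT)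
  have hLφ : ∀ τ ∈ Icc 0 t, -(Θs / 2) * τ * φ τ ≤ L τ := fun τ hτ =>
    reducedCore_neg_mul_phi_le_L hL hφ hm hL0 hφ0 hτ.1 (hτ.2.trans_lt htT)
  have hmono : MonotoneOn (fun τ => (φ τ)⁻¹ + Θs / 2 * τ ^ 3) (Icc 0 t) := by
    refine monotoneOn_of_hasDerivWithinAt_nonneg (f' := fun τ => 3 * τ * L τ / φ τ +
      Θs / 2 * (3 * τ ^ 2)) (convex_Icc 0 t) ?_ (fun τ hτ => ?_) (fun τ hτ => ?_)
    · exact ((continuousOn_Icc_of_hasDerivAt_Ico htT hφ).inv₀ fun τ hτ => (hpos τ hτ).ne').add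
        (by fun_prop)
    · rw [interior_Icc] at hτ ⊢
      have hφτ := hpos τ (Ioo_subset_Icc_self hτ)
      have hinv := (hφ τ ⟨hτ.1.le, hτ.2.trans htT⟩).inv hφτ.ne'
      refine (hinv.add ((hasDerivAt_pow 3 τ).const_mul (Θs / 2))).hasDerivWithinAt.congr_deriv ?_
      field_simp
      ring
    · rw [interior_Icc] at hτ
      have hφτ := hpos τ (Ioo_subset_Icc_self hτ)
      have h3 : -(Θs / 2) * τ * φ τ * (3 * τ) ≤ L τ * (3 * τ) :=
        mul_le_mul_of_nonneg_right (hLφ τ (Ioo_subset_Icc_self hτ)) (by linarith [hτ.1])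
      rw [div_add' _ _ _ hφτ.ne']
      exact div_nonneg (by nlinarith) hφτ.le
  have hinv := hmono (left_mem_Icc.2 ht) (right_mem_Icc.2 ht) ht
  simp only [hφ0] at hinv
  have hφt := hpos t (right_mem_Icc.2 ht)
  have := mul_le_mul_of_nonneg_left hinv (by positivity : 0 ≤ 2 * m * φ t)
  field_simp at this
  nlinarith

end ReducedCore

theorem reduced_core_phi_bounded_general (Θs m T : ℝ) (hm : 0 < m)
    (L φ : ℝ → ℝ)
    (hL : ∀ τ ∈ Set.Ico (0 : ℝ) T,
      HasDerivAt L (-τ * (L τ) ^ 2 - Θs * φ τ / 2) τ)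
    (hφ : ∀ τ ∈ Set.Ico (0 : ℝ) T,
      HasDerivAt φ (-3 * τ * L τ * φ τ) τ)
    (hL0 : L 0 = 1 / 2) (hφ0 : φ 0 = 2 * m) :
    (∀ τ : ℝ, 0 ≤ τ → τ < T → τ < (Θs * m) ^ (-(1 : ℝ) / 3) →
        φ τ ≤ 2 * m / (1 - Θs * m * τ ^ 3)) ∧
      ∃ C : ℝ, ∀ τ ∈ Set.Icc (0 : ℝ) (1 / (2 * (Θs * m) ^ ((1 : ℝ) / 3))),
        τ < T → φ τ ≤ C := by
  refine ⟨fun τ hτ hτT hτc => ?_, 16 * m / 7, fun τ hτ hτT => ?_⟩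
  · rw [le_div_iff₀ (sub_pos.2 (mul_pow_three_lt_one_of_lt_rpow hτ hτc))]
    exact reducedCore_phi_mul_one_sub_le hL hφ hm hL0 hφ0 hτ hτT
  · have hbound := reducedCore_phi_mul_one_sub_le hL hφ hm hL0 hφ0 hτ.1 hτT
    have hsmall := mul_pow_three_le_of_le_one_div_two_mul_rpow hτ.1 hτ.2
    have hpos := reducedCore_phi_pos hL hφ hm hφ0 hτ.1 hτT
    rw [le_div_iff₀ (by norm_num)]
    nlinarith

/-- Upper bound for `φ` in the reduced (`κ = 0`) core system:
for `0 ≤ τ < min(T, (Θ̇⋆m)^{-1/3})` one has `φ(τ) ≤ 2m/(1 - Θ̇⋆ m τ³)`;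
in particular `φ` is bounded on `[0, 1/(2(Θ̇⋆m)^{1/3})] ∩ [0,T)`. -/
theorem reduced_core_phi_bounded (Θs m T : ℝ) (hΘs : 0 < Θs) (hm : 0 < m)
    (hT : 0 < T) (L φ : ℝ → ℝ)
    (hL : ∀ τ ∈ Set.Ico (0 : ℝ) T,
      HasDerivAt L (-τ * (L τ) ^ 2 - Θs * φ τ / 2) τ)
    (hφ : ∀ τ ∈ Set.Ico (0 : ℝ) T,
      HasDerivAt φ (-3 * τ * L τ * φ τ) τ)
    (hL0 : L 0 = 1 / 2) (hφ0 : φ 0 = 2 * m) :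
    (∀ τ : ℝ, 0 ≤ τ → τ < T → τ < (Θs * m) ^ (-(1 : ℝ) / 3) →
        φ τ ≤ 2 * m / (1 - Θs * m * τ ^ 3)) ∧
      ∃ C : ℝ, ∀ τ ∈ Set.Icc (0 : ℝ) (1 / (2 * (Θs * m) ^ ((1 : ℝ) / 3))),
        τ < T → φ τ ≤ C :=
  reduced_core_phi_bounded_general Θs m T hm L φ hL hφ hL0 hφ0
end

section
/- Suppose (φ, χ, L) : [0,∞) → ℝ³ is a C¹ solution of the core system with κ > 1: φ' = -3χφ, χ' = -χ² + L - (1/2)Θφ, L' = -χL - (1/2)Θ'φ, where Θ(τ) = √(|λ|/3)τ(1+κτ/2), with initial data φ(0) = 2m > 0, χ(0) = κ, L(0) = (1-κ²)/2. Then L(τ) < 0 for all τ ≥ 0. -/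
/-!
Since `φ' = -3χφ` is linear in `φ` with continuous coefficient, `φ` cannot vanish (uniqueness for
linear ODEs), so `φ > 0`. At any zero of `L` the equation reduces to
`L' = -√(|λ|/3) (1 + κτ) φ / 2 < 0`, so `L`, negative at `τ = 0`, can never reach `0`: it would
have to cross it increasing.
-/

open Set

theorem eqOn_zero_of_hasDerivAt_mul_self_of_eq_zero_right {f a : ℝ → ℝ} {s t : ℝ}
    (ha : ContinuousOn a (Icc s t)) (hf : ∀ x ∈ Icc s t, HasDerivAt f (a x * f x) x)
    (ht : f t = 0) : EqOn f 0 (Icc s t) := by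
  obtain ⟨C, hC⟩ := isCompact_Icc.exists_bound_of_continuousOn ha
  have hlip : ∀ x ∈ Ioc s t, LipschitzOnWith C.toNNReal (fun y => a x * y) univ := by
    intro x hx
    refine ((lipschitzWith_smul (a x)).weaken ?_).lipschitzOnWith
    rw [← NNReal.coe_le_coe, coe_nnnorm, Real.coe_toNNReal']
    exact (hC x (Ioc_subset_Icc_self hx)).trans (le_max_left _ _)
  have hf_cont : ContinuousOn f (Icc s t) := fun x hx => (hf x hx).continuousAt.continuousWithinAt
  refine ODE_solution_unique_of_mem_Icc_left hlip hf_cont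
    (fun x hx => (hf x (Ioc_subset_Icc_self hx)).hasDerivWithinAt) (fun _ _ => mem_univ _)
    continuousOn_const (fun x _ => ?_) (fun _ _ => mem_univ _) ht
  rw [Pi.zero_apply, mul_zero]
  exact hasDerivWithinAt_const x (Iic x) 0

theorem pos_of_hasDerivAt_mul_self {f a : ℝ → ℝ} {s : ℝ}
    (ha : ContinuousOn a (Ici s)) (hf : ∀ x ∈ Ici s, HasDerivAt f (a x * f x) x)
    (hs : 0 < f s) : ∀ x ∈ Ici s, 0 < f x := by
  intro x hx
  by_contra! hfx
  have hf_cont : ContinuousOn f (Icc s x) :=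
    fun y hy => (hf y hy.1).continuousAt.continuousWithinAt
  obtain ⟨y, hy, hfy⟩ :=
    intermediate_value_Icc' (mem_Ici.mp hx) hf_cont ⟨hfx, hs.le⟩
  have hzero := eqOn_zero_of_hasDerivAt_mul_self_of_eq_zero_right (ha.mono Icc_subset_Ici_self)
    (fun z hz => hf z hz.1) hfy
  exact hs.ne' (hzero ⟨le_rfl, hy.1⟩)

theorem neg_of_hasDerivAt_neg_of_eq_zero {f f' : ℝ → ℝ} {s : ℝ}
    (hf : ∀ x ∈ Ici s, HasDerivAt f (f' x) x) (hs : f s < 0)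
    (hzero : ∀ x ∈ Ici s, f x = 0 → f' x < 0) : ∀ x ∈ Ici s, f x < 0 := by
  have hle : ∀ x ∈ Ici s, f x ≤ 0 := fun x hx =>
    image_le_of_deriv_right_lt_deriv_boundary (B := 0) (B' := 0)
      (fun y hy => (hf y hy.1).continuousAt.continuousWithinAt)
      (fun y hy => (hf y hy.1).hasDerivWithinAt) hs.le (fun _ => hasDerivAt_const _ _)
      (fun y hy => hzero y hy.1) ⟨hx, le_rfl⟩
  intro x hx
  refine (hle x hx).lt_of_ne fun hfx => (hzero x hx hfx).ne ?_
  have hsx : s < x := (mem_Ici.mp hx).lt_of_ne (by rintro rfl; exact hs.ne hfx)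
  have hmax : IsLocalMax f x := by
    filter_upwards [Ioi_mem_nhds hsx] with y hy
    rw [hfx]
    exact hle y (mem_Ici.mpr (le_of_lt hy))
  exact hmax.hasDerivAt_eq_zero (hf x hx)

theorem core_system_kappa_gt_one_L_negative_general (m lam κ : ℝ)
    (hm : 0 < m) (hlam : lam < 0) (hκ : 1 < κ) (φ χ L : ℝ → ℝ)
    (hφ : ∀ τ : ℝ, 0 ≤ τ → HasDerivAt φ (-3 * χ τ * φ τ) τ)
    (hχ : ∀ τ : ℝ, 0 ≤ τ → HasDerivAt χ
      (-(χ τ) ^ 2 + L τ - (Real.sqrt (|lam| / 3) * τ * (1 + κ * τ / 2)) * φ τ / 2) τ)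
    (hL : ∀ τ : ℝ, 0 ≤ τ → HasDerivAt L
      (-(χ τ) * L τ - (Real.sqrt (|lam| / 3) * (1 + κ * τ)) * φ τ / 2) τ)
    (hφ0 : φ 0 = 2 * m) (hL0 : L 0 = (1 - κ ^ 2) / 2) :
    ∀ τ : ℝ, 0 ≤ τ → L τ < 0 := by
  have hφ_pos : ∀ τ ∈ Ici (0 : ℝ), 0 < φ τ :=
    pos_of_hasDerivAt_mul_self (a := fun τ => -3 * χ τ)
      (fun τ hτ => ((hχ τ hτ).continuousAt.const_mul (-3)).continuousWithinAt) hφ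
      (by rw [hφ0]; positivity)
  have hsqrt_pos : 0 < Real.sqrt (|lam| / 3) :=
    Real.sqrt_pos.mpr (div_pos (abs_pos.mpr hlam.ne) three_pos)
  refine neg_of_hasDerivAt_neg_of_eq_zero hL (by rw [hL0]; nlinarith) fun τ hτ hLτ => ?_
  have hκτ : 0 < 1 + κ * τ := by nlinarith [mem_Ici.mp hτ]
  have := mul_pos (mul_pos hsqrt_pos hκτ) (hφ_pos τ hτ)
  rw [hLτ]
  linarith

/-- For a global C¹ solution of the core system with `κ > 1`
(`Θ(τ) = √(|λ|/3)τ(1+κτ/2)`, data `φ(0)=2m>0`, `χ(0)=κ`, `L(0)=(1-κ²)/2`),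
one has `L(τ) < 0` for all `τ ≥ 0`. -/
theorem core_system_kappa_gt_one_L_negative (m lam κ : ℝ)
    (hm : 0 < m) (hlam : lam < 0) (hκ : 1 < κ) (φ χ L : ℝ → ℝ)
    (hφ : ∀ τ : ℝ, 0 ≤ τ → HasDerivAt φ (-3 * χ τ * φ τ) τ)
    (hχ : ∀ τ : ℝ, 0 ≤ τ → HasDerivAt χ
      (-(χ τ) ^ 2 + L τ - (Real.sqrt (|lam| / 3) * τ * (1 + κ * τ / 2)) * φ τ / 2) τ)
    (hL : ∀ τ : ℝ, 0 ≤ τ → HasDerivAt L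
      (-(χ τ) * L τ - (Real.sqrt (|lam| / 3) * (1 + κ * τ)) * φ τ / 2) τ)
    (hφ0 : φ 0 = 2 * m) (hχ0 : χ 0 = κ) (hL0 : L 0 = (1 - κ ^ 2) / 2) :
    ∀ τ : ℝ, 0 ≤ τ → L τ < 0 :=
  core_system_kappa_gt_one_L_negative_general m lam κ hm hlam hκ φ χ L hφ hχ hL hφ0 hL0
end

section
/- Under the hypotheses of the κ > 1 core system (φ' = -3χφ, χ' = -χ² + L - (1/2)Θφ, L' = -χL - (1/2)Θ'φ, Θ(τ)=√(|λ|/3)τ(1+κτ/2), φ(0)=2m>0, χ(0)=κ>1, L(0)=(1-κ²)/2), any global C¹ solution on [0,∞) satisfies: there exists 0 < τ_χ < ∞ with χ(τ_χ) = 0. -/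
/-!
If `χ` never vanished on `(0, ∞)` it would stay positive. Integrating factors then give `φ > 0`
and `L < 0`, so `χ' ≤ -χ²` and `χ(τ) ≤ 1 / (τ + 1/κ)`. Fed into `φ' = -3χφ` this yields
`φ(τ) ≥ 2m / (κτ + 1)³`, while `Θ(τ)` grows like `τ²`; so for `τ ≥ 1/κ` the forcing term
`Θφ/2` is at least `A/τ`, hence `χ' ≤ -A/τ` and `χ → -∞`, contradicting positivity.
-/

open Set Filter Real

lemma monotoneOn_Ici_of_hasDerivAt_nonneg {f f' : ℝ → ℝ} {a : ℝ}
    (hf : ∀ t, a ≤ t → HasDerivAt f (f' t) t) (hf' : ∀ t, a ≤ t → 0 ≤ f' t) :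
    MonotoneOn f (Ici a) :=
  monotoneOn_of_hasDerivWithinAt_nonneg (convex_Ici a)
    (fun t ht => (hf t ht).continuousAt.continuousWithinAt)
    (fun t ht => (hf t (interior_subset ht)).hasDerivWithinAt)
    (fun t ht => hf' t (interior_subset ht))

lemma antitoneOn_Ici_of_hasDerivAt_nonpos {f f' : ℝ → ℝ} {a : ℝ}
    (hf : ∀ t, a ≤ t → HasDerivAt f (f' t) t) (hf' : ∀ t, a ≤ t → f' t ≤ 0) :
    AntitoneOn f (Ici a) :=
  antitoneOn_of_hasDerivWithinAt_nonpos (convex_Ici a)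
    (fun t ht => (hf t ht).continuousAt.continuousWithinAt)
    (fun t ht => (hf t (interior_subset ht)).hasDerivWithinAt)
    (fun t ht => hf' t (interior_subset ht))

lemma exists_hasDerivAt_of_continuousOn_Ici {a : ℝ → ℝ} (ha : ContinuousOn a (Ici 0)) :
    ∃ P : ℝ → ℝ, ∀ t, 0 ≤ t → HasDerivAt P (a t) t := by
  have hcont : Continuous fun t => a (max t 0) :=
    ha.comp_continuous (continuous_id.max continuous_const) fun t => le_max_right t 0
  refine ⟨fun t => ∫ s in (0 : ℝ)..t, a (max s 0), fun t ht => ?_⟩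
  simpa [max_eq_left ht] using (hcont.integral_hasStrictDerivAt 0 t).hasDerivAt

lemma pos_of_forall_ne_zero_of_continuousOn_Ici {f : ℝ → ℝ} (hf : ContinuousOn f (Ici 0))
    (h0 : 0 < f 0) (hne : ∀ t, 0 < t → f t ≠ 0) {t : ℝ} (ht : 0 ≤ t) : 0 < f t := by
  by_contra! hft
  obtain ⟨s, hs, hfs⟩ : (0 : ℝ) ∈ f '' Icc 0 t :=
    intermediate_value_Icc' ht (hf.mono Icc_subset_Ici_self) ⟨hft, h0.le⟩
  rcases hs.1.eq_or_lt with rfl | hs0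
  · exact h0.ne' hfs
  · exact hne s hs0 hfs

lemma le_exp_mul_of_hasDerivAt_le_mul {f f' a P : ℝ → ℝ}
    (hP : ∀ t, 0 ≤ t → HasDerivAt P (a t) t) (hf : ∀ t, 0 ≤ t → HasDerivAt f (f' t) t)
    (hf' : ∀ t, 0 ≤ t → f' t ≤ a t * f t) {t : ℝ} (ht : 0 ≤ t) :
    f t ≤ exp (P t - P 0) * f 0 := by
  have hanti : AntitoneOn (fun s => exp (-P s) * f s) (Ici 0) := by
    refine antitoneOn_Ici_of_hasDerivAt_nonpos
      (fun s hs => ((hP s hs).neg.exp).mul (hf s hs)) fun s hs => ?_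
    have := mul_le_mul_of_nonneg_left (hf' s hs) (exp_pos (-P s)).le
    simp only [Pi.neg_apply]
    linarith
  have h : exp (-P t) * f t ≤ exp (-P 0) * f 0 := hanti self_mem_Ici ht ht
  calc f t = exp (P t) * (exp (-P t) * f t) := by
        rw [← mul_assoc, ← exp_add, add_neg_cancel, exp_zero, one_mul]
    _ ≤ exp (P t) * (exp (-P 0) * f 0) := by gcongr
    _ = exp (P t - P 0) * f 0 := by rw [sub_eq_add_neg, exp_add, mul_assoc]

lemma neg_of_hasDerivAt_le_mul {f f' a : ℝ → ℝ} (ha : ContinuousOn a (Ici 0))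
    (hf : ∀ t, 0 ≤ t → HasDerivAt f (f' t) t) (hf' : ∀ t, 0 ≤ t → f' t ≤ a t * f t)
    (h0 : f 0 < 0) {t : ℝ} (ht : 0 ≤ t) : f t < 0 := by
  obtain ⟨P, hP⟩ := exists_hasDerivAt_of_continuousOn_Ici ha
  exact (le_exp_mul_of_hasDerivAt_le_mul hP hf hf' ht).trans_lt
    (mul_neg_of_pos_of_neg (exp_pos _) h0)

lemma mul_add_inv_le_one_of_hasDerivAt_le_neg_sq {χ χ' : ℝ → ℝ}
    (hχ : ∀ t, 0 ≤ t → HasDerivAt χ (χ' t) t) (hχ' : ∀ t, 0 ≤ t → χ' t ≤ -χ t ^ 2)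
    (hpos : ∀ t, 0 ≤ t → 0 < χ t) {t : ℝ} (ht : 0 ≤ t) : χ t * (t + (χ 0)⁻¹) ≤ 1 := by
  have hmono : MonotoneOn (fun s => (χ s)⁻¹ - s) (Ici 0) := by
    refine monotoneOn_Ici_of_hasDerivAt_nonneg
      (fun s hs => ((hχ s hs).inv (hpos s hs).ne').sub (hasDerivAt_id s)) fun s hs => ?_
    have hsq : 0 < χ s ^ 2 := by have := hpos s hs; positivity
    rw [sub_nonneg, le_div_iff₀ hsq]
    linarith [hχ' s hs]
  have h : (χ 0)⁻¹ - 0 ≤ (χ t)⁻¹ - t := hmono self_mem_Ici ht ht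
  calc χ t * (t + (χ 0)⁻¹) ≤ χ t * (χ t)⁻¹ :=
        mul_le_mul_of_nonneg_left (by linarith) (hpos t ht).le
    _ = 1 := mul_inv_cancel₀ (hpos t ht).ne'

lemma le_mul_add_pow_three_of_hasDerivAt {φ χ : ℝ → ℝ} {s : ℝ}
    (hφ : ∀ t, 0 ≤ t → HasDerivAt φ (-3 * χ t * φ t) t) (hφpos : ∀ t, 0 ≤ t → 0 ≤ φ t)
    (hχ : ∀ t, 0 ≤ t → χ t * (t + s) ≤ 1) {t : ℝ} (ht : 0 ≤ t) :
    φ 0 * s ^ 3 ≤ φ t * (t + s) ^ 3 := by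
  have hmono : MonotoneOn (fun u => φ u * (u + s) ^ 3) (Ici 0) := by
    refine monotoneOn_Ici_of_hasDerivAt_nonneg
      (fun u hu => (hφ u hu).mul (((hasDerivAt_id u).add_const s).pow 3)) fun u hu => ?_
    have := hφpos u hu
    have : 0 ≤ 1 - χ u * (u + s) := by linarith [hχ u hu]
    calc (0 : ℝ) ≤ 3 * φ u * (u + s) ^ 2 * (1 - χ u * (u + s)) := by positivity
      _ = _ := by push_cast [id]; ring
  simpa using hmono self_mem_Ici ht ht

lemma tendsto_atBot_of_hasDerivAt_le_neg_div {f f' : ℝ → ℝ} {A t₀ : ℝ} (hA : 0 < A)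
    (ht₀ : 0 < t₀) (hf : ∀ t, t₀ ≤ t → HasDerivAt f (f' t) t)
    (hf' : ∀ t, t₀ ≤ t → f' t ≤ -(A / t)) : Tendsto f atTop atBot := by
  have hanti : AntitoneOn (fun t => f t + A * log t) (Ici t₀) := by
    refine antitoneOn_Ici_of_hasDerivAt_nonpos (fun t ht => (hf t ht).add
      ((hasDerivAt_log (ht₀.trans_le ht).ne').const_mul A)) fun t ht => ?_
    have := hf' t ht
    rw [← div_eq_mul_inv]
    linarith
  have hbound : ∀ᶠ t in atTop, f t ≤ f t₀ + A * log t₀ + -(A * log t) :=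
    eventually_ge_atTop t₀ |>.mono fun t ht => by
      have := hanti self_mem_Ici ht ht
      simp only at this
      linarith
  refine tendsto_atBot_mono' atTop hbound (tendsto_atBot_add_const_left _ _ ?_)
  exact tendsto_neg_atTop_atBot.comp (tendsto_log_atTop.const_mul_atTop hA)

-- `c m / (16 κ²) / x` is half the product of `Θ(x) ≥ c κ x² / 2` and of
-- `y ≥ m / (4 κ³ x³)`, the latter from `x + κ⁻¹ ≤ 2x`.
lemma div_le_mul_mul_of_le_mul_add_pow_three {c κ m x y : ℝ} (hc : 0 ≤ c) (hκ : 0 < κ)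
    (hm : 0 ≤ m) (hx : κ⁻¹ ≤ x) (hy : 2 * m / κ ^ 3 ≤ y * (x + κ⁻¹) ^ 3) :
    c * m / (16 * κ ^ 2) / x ≤ c * x * (1 + κ * x / 2) * y / 2 := by
  have hx0 : 0 < x := (inv_pos.2 hκ).trans_le hx
  have hcube : (x + κ⁻¹) ^ 3 ≤ 8 * x ^ 3 :=
    calc (x + κ⁻¹) ^ 3 ≤ (2 * x) ^ 3 := by gcongr; linarith
      _ = 8 * x ^ 3 := by ring
  have hy0 : 0 ≤ y := by
    have : 0 ≤ y * (x + κ⁻¹) ^ 3 := le_trans (by positivity) hy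
    exact nonneg_of_mul_nonneg_left this (by positivity)
  have hy_low : m / (4 * κ ^ 3 * x ^ 3) ≤ y := by
    have : 2 * m / κ ^ 3 ≤ y * (8 * x ^ 3) := hy.trans (by gcongr)
    rw [div_le_iff₀ (by positivity)] at this ⊢
    linarith
  have hΘ : c * (κ * x ^ 2 / 2) ≤ c * x * (1 + κ * x / 2) := by
    nlinarith [mul_nonneg hc hx0.le]
  calc c * m / (16 * κ ^ 2) / x = c * (κ * x ^ 2 / 2) * (m / (4 * κ ^ 3 * x ^ 3)) / 2 := by
        field_simp; ring
    _ ≤ c * x * (1 + κ * x / 2) * y / 2 := by gcongr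

/-- For a global C¹ solution of the core system with `κ > 1`, the field `χ`
must vanish at some finite positive time. -/
theorem core_system_kappa_gt_one_chi_vanishes (m lam κ : ℝ)
    (hm : 0 < m) (hlam : lam < 0) (hκ : 1 < κ) (φ χ L : ℝ → ℝ)
    (hφ : ∀ τ : ℝ, 0 ≤ τ → HasDerivAt φ (-3 * χ τ * φ τ) τ)
    (hχ : ∀ τ : ℝ, 0 ≤ τ → HasDerivAt χ
      (-(χ τ) ^ 2 + L τ - (Real.sqrt (|lam| / 3) * τ * (1 + κ * τ / 2)) * φ τ / 2) τ)
    (hL : ∀ τ : ℝ, 0 ≤ τ → HasDerivAt L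
      (-(χ τ) * L τ - (Real.sqrt (|lam| / 3) * (1 + κ * τ)) * φ τ / 2) τ)
    (hφ0 : φ 0 = 2 * m) (hχ0 : χ 0 = κ) (hL0 : L 0 = (1 - κ ^ 2) / 2) :
    ∃ τχ : ℝ, 0 < τχ ∧ χ τχ = 0 := by
  by_contra! hne
  set c := Real.sqrt (|lam| / 3)
  have hc : 0 < c := Real.sqrt_pos.2 (by have := abs_pos.2 hlam.ne; positivity)
  have hκ0 : 0 < κ := by linarith
  have hχcont : ContinuousOn χ (Ici 0) := fun t ht => (hχ t ht).continuousAt.continuousWithinAt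
  have hχpos : ∀ t, 0 ≤ t → 0 < χ t := fun t =>
    pos_of_forall_ne_zero_of_continuousOn_Ici hχcont (hχ0 ▸ hκ0) hne
  have hφpos : ∀ t, 0 ≤ t → 0 < φ t := fun t ht => neg_lt_zero.1 <|
    neg_of_hasDerivAt_le_mul (continuousOn_const.mul hχcont) (fun s hs => (hφ s hs).neg)
      (fun s _ => (neg_mul_eq_mul_neg _ _).le) (by simp [hφ0, hm]) ht
  have hLneg : ∀ t, 0 ≤ t → L t < 0 := fun t ht =>
    neg_of_hasDerivAt_le_mul hχcont.neg hL (fun s hs => by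
      have : 0 ≤ c * (1 + κ * s) * φ s := by have := hφpos s hs; positivity
      simp only [Pi.neg_apply]; linarith) (by rw [hL0]; nlinarith) ht
  have hχ_le : ∀ t, 0 ≤ t → χ t * (t + κ⁻¹) ≤ 1 := fun t ht => hχ0 ▸
    mul_add_inv_le_one_of_hasDerivAt_le_neg_sq hχ (fun s hs => by
      have : 0 ≤ c * s * (1 + κ * s / 2) * φ s := by have := hφpos s hs; positivity
      linarith [hLneg s hs]) hχpos ht
  have hφ_low : ∀ t, 0 ≤ t → 2 * m / κ ^ 3 ≤ φ t * (t + κ⁻¹) ^ 3 := fun t ht => by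
    have := le_mul_add_pow_three_of_hasDerivAt hφ (fun s hs => (hφpos s hs).le) hχ_le ht
    rwa [hφ0, inv_pow, ← div_eq_mul_inv] at this
  have hχ_tendsto : Tendsto χ atTop atBot :=
    tendsto_atBot_of_hasDerivAt_le_neg_div (A := c * m / (16 * κ ^ 2)) (by positivity)
      (inv_pos.2 hκ0) (fun t ht => hχ t ((inv_pos.2 hκ0).le.trans ht)) fun t ht => by
        have ht0 : 0 ≤ t := (inv_pos.2 hκ0).le.trans ht
        have := div_le_mul_mul_of_le_mul_add_pow_three hc.le hκ0 hm.le ht (hφ_low t ht0)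
        linarith [hLneg t ht0, sq_nonneg (χ t)]
  obtain ⟨T, hT0, hχT⟩ := ((eventually_ge_atTop 0).and (hχ_tendsto.eventually_lt_atBot 0)).exists
  exact lt_asymm hχT (hχpos T hT0)
end

section
/- Let Θ̇⋆ > 0 and let φ : [0,T] → ℝ be continuous with φ(τ) > -τ for τ ≥ 0. Suppose L̄ : [0,T'] → ℝ (T' ≤ T) is a C¹ solution of L̄' = -τL̄² + Θ̇⋆φ with L̄(0) = -1/2. Then L̄(τ) ≥ -√(Θ̇⋆)·tan((1/2)√(Θ̇⋆)τ² + arctan(1/(2√(Θ̇⋆)))) for all τ in [0,T'] for which the argument of tan lies in [0, π/2). -/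
/-!
The function `g τ = -√Θ tan(√Θ τ²/2 + arctan(1/(2√Θ)))` solves the Riccati equation
`g' = -τ (g² + Θ)` with `g 0 = -1/2`. Since `φ > -τ`, the right-hand side of the equation for `L̄`
strictly exceeds that of `g` wherever the two curves meet, so `L̄` can never cross below `g`.
-/

open Real Set

theorem riccati_comparison {L g φ : ℝ → ℝ} {Θ b : ℝ} (hΘ : 0 < Θ)
    (hL : ∀ x ∈ Icc 0 b, HasDerivAt L (-x * L x ^ 2 + Θ * φ x) x)
    (hg : ∀ x ∈ Icc 0 b, HasDerivAt g (-x * (g x ^ 2 + Θ)) x)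
    (hφ : ∀ x ∈ Icc 0 b, -x < φ x) (h0 : g 0 ≤ L 0) :
    ∀ x ∈ Icc 0 b, g x ≤ L x := by
  have hLc : ContinuousOn L (Icc 0 b) := fun x hx => (hL x hx).continuousAt.continuousWithinAt
  have hgc : ContinuousOn g (Icc 0 b) := fun x hx => (hg x hx).continuousAt.continuousWithinAt
  refine image_le_of_deriv_right_lt_deriv_boundary' hgc
    (fun x hx => (hg x (Ico_subset_Icc_self hx)).hasDerivWithinAt) h0 hLc
    (fun x hx => (hL x (Ico_subset_Icc_self hx)).hasDerivWithinAt) ?_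
  intro x hx hgL
  have hφx := neg_lt_iff_pos_add.mp (hφ x (Ico_subset_Icc_self hx))
  rw [hgL]
  linarith [mul_pos hΘ hφx]

theorem hasDerivAt_neg_mul_tan_half_mul_sq_add (s c x : ℝ)
    (hx : cos (1 / 2 * s * x ^ 2 + c) ≠ 0) :
    HasDerivAt (fun y => -s * tan (1 / 2 * s * y ^ 2 + c))
      (-x * ((-s * tan (1 / 2 * s * x ^ 2 + c)) ^ 2 + s ^ 2)) x := by
  have harg : HasDerivAt (fun y => 1 / 2 * s * y ^ 2 + c) (s * x) x :=
    (((hasDerivAt_pow 2 x).const_mul (1 / 2 * s)).add_const c).congr_deriv (by ring)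
  have hsec : 1 / cos (1 / 2 * s * x ^ 2 + c) ^ 2 = 1 + tan (1 / 2 * s * x ^ 2 + c) ^ 2 := by
    rw [← inv_one_add_tan_sq hx, one_div, inv_inv]
  refine (((hasDerivAt_tan hx).comp x harg).const_mul (-s)).congr_deriv ?_
  rw [hsec]
  ring

theorem cos_half_mul_sq_add_arctan_pos {s c x τ : ℝ} (hs : 0 ≤ s) (hx : x ∈ Icc 0 τ)
    (hτ : 1 / 2 * s * τ ^ 2 + arctan c < π / 2) :
    0 < cos (1 / 2 * s * x ^ 2 + arctan c) := by
  have hxτ : x ^ 2 ≤ τ ^ 2 := pow_le_pow_left₀ hx.1 hx.2 2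
  have hlow := neg_pi_div_two_lt_arctan c
  apply cos_pos_of_mem_Ioo
  constructor <;> nlinarith [sq_nonneg x]

theorem supplementary_system_lower_bound_general (Θs T T' : ℝ) (hΘs : 0 < Θs)
    (hT' : T' ≤ T) (φ Lb : ℝ → ℝ)
    (hφgt : ∀ τ ∈ Set.Icc (0 : ℝ) T, φ τ > -τ)
    (hLb : ∀ τ ∈ Set.Icc (0 : ℝ) T',
      HasDerivAt Lb (-τ * (Lb τ) ^ 2 + Θs * φ τ) τ)
    (hLb0 : Lb 0 = -(1 / 2)) :
    ∀ τ ∈ Set.Icc (0 : ℝ) T',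
      (1 / 2) * Real.sqrt Θs * τ ^ 2 + Real.arctan (1 / (2 * Real.sqrt Θs))
          < Real.pi / 2 →
      Lb τ ≥ -Real.sqrt Θs *
        Real.tan ((1 / 2) * Real.sqrt Θs * τ ^ 2 +
          Real.arctan (1 / (2 * Real.sqrt Θs))) := by
  intro τ hτ harg
  have hs : 0 < √Θs := sqrt_pos.mpr hΘs
  have hIcc : Icc 0 τ ⊆ Icc 0 T' := Icc_subset_Icc le_rfl hτ.2
  set a := arctan (1 / (2 * √Θs)) with ha
  have hbarrier : ∀ x ∈ Icc 0 τ, HasDerivAt (fun y => -√Θs * tan (1 / 2 * √Θs * y ^ 2 + a))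
      (-x * ((-√Θs * tan (1 / 2 * √Θs * x ^ 2 + a)) ^ 2 + Θs)) x := fun x hx => by
    simpa only [sq_sqrt hΘs.le] using hasDerivAt_neg_mul_tan_half_mul_sq_add _ _ x
      (cos_half_mul_sq_add_arctan_pos hs.le hx harg).ne'
  have hbarrier0 : -√Θs * tan (1 / 2 * √Θs * 0 ^ 2 + a) = Lb 0 := by
    rw [hLb0, zero_pow two_ne_zero, mul_zero, zero_add, ha, tan_arctan]
    field_simp
  exact riccati_comparison hΘs (fun x hx => hLb x (hIcc hx)) hbarrier
    (fun x hx => hφgt x (Icc_subset_Icc le_rfl hT' (hIcc hx))) hbarrier0.le τ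
    (right_mem_Icc.mpr hτ.1)

/-- Lower bound for the supplementary system in the `κ = 0` gauge:
if `L̄' = -τL̄² + Θ̇⋆φ` with `L̄(0) = -1/2` and `φ(τ) > -τ`, then
`L̄(τ) ≥ -√Θ̇⋆ tan(√Θ̇⋆ τ²/2 + arctan(1/(2√Θ̇⋆)))` wherever the argument
of `tan` lies in `[0, π/2)`. -/
theorem supplementary_system_lower_bound (Θs T T' : ℝ) (hΘs : 0 < Θs)
    (hT' : T' ≤ T) (hT'0 : 0 ≤ T') (φ Lb : ℝ → ℝ)
    (hφc : ContinuousOn φ (Set.Icc 0 T))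
    (hφgt : ∀ τ ∈ Set.Icc (0 : ℝ) T, φ τ > -τ)
    (hLb : ∀ τ ∈ Set.Icc (0 : ℝ) T',
      HasDerivAt Lb (-τ * (Lb τ) ^ 2 + Θs * φ τ) τ)
    (hLb0 : Lb 0 = -(1 / 2)) :
    ∀ τ ∈ Set.Icc (0 : ℝ) T',
      (1 / 2) * Real.sqrt Θs * τ ^ 2 + Real.arctan (1 / (2 * Real.sqrt Θs))
          < Real.pi / 2 →
      Lb τ ≥ -Real.sqrt Θs *
        Real.tan ((1 / 2) * Real.sqrt Θs * τ ^ 2 +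
          Real.arctan (1 / (2 * Real.sqrt Θs))) :=
  supplementary_system_lower_bound_general Θs T T' hΘs hT' φ Lb hφgt hLb hLb0
end

section
/- For m > 0 and λ < 0, the function W(r) = H(r)^{1/√3} with H(r) = (√(3r) + √(r+6m))/((√(3r) - √(r+6m))(√r + √(r+6m))^{2√3}) satisfies: W(r)·(r-3m)^{1/√3} tends to a finite nonzero limit as r → 3m⁺; equivalently, W(r) diverges like (r-3m)^{-1/√3} as r → 3m from above. -/
/-!
The singularity of `H` at `r = 3m` is the simple zero of `√(3r) - √(r + 6m)`: since
`(√(3r) - √(r + 6m)) (√(3r) + √(r + 6m)) = 2 (r - 3m)`, the product `H(r) (r - 3m)` equals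
`(√(3r) + √(r + 6m))² / (2 (√r + √(r + 6m))^{2√3})`, which is continuous and positive at `r = 3m`.
Since `H` and `r - 3m` are nonnegative to the right of `3m`, `W(r) (r - 3m)^{1/√3}` is the
`1/√3`-th power of this product and converges to the `1/√3`-th power of its value at `3m`.
-/

open Real Filter Set Topology

lemma tendsto_rpow_mul_rpow_of_tendsto_mul {α : Type*} {l : Filter α} {f g : α → ℝ} {L : ℝ}
    (p : ℝ) (hf : ∀ᶠ x in l, 0 ≤ f x) (hg : ∀ᶠ x in l, 0 ≤ g x)
    (h : Tendsto (fun x => f x * g x) l (𝓝 L)) (hL : L ≠ 0 ∨ 0 ≤ p) :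
    Tendsto (fun x => f x ^ p * g x ^ p) l (𝓝 (L ^ p)) :=
  (h.rpow_const hL).congr' <| by
    filter_upwards [hf, hg] with x hfx hgx using mul_rpow hfx hgx

lemma Real.sqrt_sub_sqrt_mul_sqrt_add_sqrt {x y : ℝ} (hx : 0 ≤ x) (hy : 0 ≤ y) :
    (√x - √y) * (√x + √y) = x - y := by
  linear_combination sq_sqrt hx - sq_sqrt hy

namespace ExtremalSdS

noncomputable def H (m r : ℝ) : ℝ :=
  (√(3 * r) + √(r + 6 * m)) / ((√(3 * r) - √(r + 6 * m)) * (√r + √(r + 6 * m)) ^ (2 * √3))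

noncomputable def regularizedH (m r : ℝ) : ℝ :=
  (√(3 * r) + √(r + 6 * m)) ^ 2 / (2 * (√r + √(r + 6 * m)) ^ (2 * √3))

variable {m r : ℝ}

lemma sqrt_add_six_mul_lt_sqrt_three_mul (hm : 0 < m) (hr : 3 * m < r) :
    √(r + 6 * m) < √(3 * r) :=
  sqrt_lt_sqrt (by linarith) (by linarith)

lemma sqrt_add_sqrt_add_pos (m : ℝ) (hr : 0 < r) : 0 < √r + √(r + 6 * m) := by
  have := sqrt_pos.2 hr
  positivity

lemma H_pos (hm : 0 < m) (hr : 3 * m < r) : 0 < H m r := by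
  have hlt := sqrt_add_six_mul_lt_sqrt_three_mul hm hr
  have hsum := sqrt_add_sqrt_add_pos m (show 0 < r by linarith)
  have h3r := sqrt_pos.2 (show 0 < 3 * r by linarith)
  exact div_pos (by positivity) (mul_pos (sub_pos.2 hlt) (rpow_pos_of_pos hsum _))

lemma H_mul_sub_eq (hm : 0 < m) (hr : 3 * m < r) : H m r * (r - 3 * m) = regularizedH m r := by
  have hdiff : (√(3 * r) - √(r + 6 * m)) * (√(3 * r) + √(r + 6 * m)) = 2 * (r - 3 * m) := by
    rw [sqrt_sub_sqrt_mul_sqrt_add_sqrt (by linarith) (by linarith)]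
    ring
  have hne : √(3 * r) - √(r + 6 * m) ≠ 0 :=
    (sub_pos.2 (sqrt_add_six_mul_lt_sqrt_three_mul hm hr)).ne'
  have hpow : (√r + √(r + 6 * m)) ^ (2 * √3) ≠ 0 :=
    (rpow_pos_of_pos (sqrt_add_sqrt_add_pos m (show 0 < r by linarith)) _).ne'
  unfold H regularizedH
  field_simp
  linear_combination (-(√(3 * r) + √(r + 6 * m))) * hdiff

lemma regularizedH_pos (m : ℝ) (hr : 0 < r) : 0 < regularizedH m r := by
  have := sqrt_pos.2 hr
  have := sqrt_pos.2 (show 0 < 3 * r by linarith)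
  unfold regularizedH
  positivity

lemma continuousAt_regularizedH (m : ℝ) (hr : 0 < r) : ContinuousAt (regularizedH m) r := by
  have hsum := sqrt_add_sqrt_add_pos m hr
  have hpow : ContinuousAt (fun s : ℝ => (√s + √(s + 6 * m)) ^ (2 * √3)) r :=
    ContinuousAt.rpow_const (by fun_prop) (Or.inl hsum.ne')
  exact ContinuousAt.div (by fun_prop) (continuousAt_const.mul hpow)
    (by have := rpow_pos_of_pos hsum (2 * √3); positivity)

end ExtremalSdS

open ExtremalSdS in
theorem extremal_SdS_W_blowup_rate_general (m : ℝ) (hm : 0 < m) :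
    ∃ c : ℝ, c ≠ 0 ∧
      Filter.Tendsto
        (fun r : ℝ =>
          ((Real.sqrt (3 * r) + Real.sqrt (r + 6 * m)) /
              ((Real.sqrt (3 * r) - Real.sqrt (r + 6 * m)) *
                (Real.sqrt r + Real.sqrt (r + 6 * m)) ^ (2 * Real.sqrt 3)))
              ^ ((1 : ℝ) / Real.sqrt 3) *
            (r - 3 * m) ^ ((1 : ℝ) / Real.sqrt 3))
        (nhdsWithin (3 * m) (Set.Ioi (3 * m))) (nhds c) := by
  have h3m : 0 < 3 * m := by positivity
  have hL := regularizedH_pos m h3m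
  refine ⟨regularizedH m (3 * m) ^ (1 / √3), (rpow_pos_of_pos hL _).ne', ?_⟩
  have hright : ∀ᶠ r in 𝓝[>] (3 * m), 3 * m < r := self_mem_nhdsWithin
  have hprod : Tendsto (fun r => H m r * (r - 3 * m)) (𝓝[>] (3 * m))
      (𝓝 (regularizedH m (3 * m))) :=
    (continuousAt_regularizedH m h3m).continuousWithinAt.tendsto.congr' <|
      hright.mono fun r hr => (H_mul_sub_eq hm hr).symm
  exact tendsto_rpow_mul_rpow_of_tendsto_mul _ (hright.mono fun r hr => (H_pos hm hr).le)
    (hright.mono fun r hr => sub_nonneg.2 hr.le) hprod (Or.inl hL.ne')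

/-- In the extremal Schwarzschild-de Sitter spacetime, with
`H(r) = (√(3r)+√(r+6m)) / ((√(3r)-√(r+6m))(√r+√(r+6m))^{2√3})`,
the function `W(r) = H(r)^{1/√3}` satisfies: `W(r)·(r-3m)^{1/√3}` tends to a
finite nonzero limit as `r → 3m⁺`. -/
theorem extremal_SdS_W_blowup_rate (m lam : ℝ) (hm : 0 < m) (hlam : lam < 0) :
    ∃ c : ℝ, c ≠ 0 ∧
      Filter.Tendsto
        (fun r : ℝ =>
          ((Real.sqrt (3 * r) + Real.sqrt (r + 6 * m)) /
              ((Real.sqrt (3 * r) - Real.sqrt (r + 6 * m)) *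
                (Real.sqrt r + Real.sqrt (r + 6 * m)) ^ (2 * Real.sqrt 3)))
              ^ ((1 : ℝ) / Real.sqrt 3) *
            (r - 3 * m) ^ ((1 : ℝ) / Real.sqrt 3))
        (nhdsWithin (3 * m) (Set.Ioi (3 * m))) (nhds c) :=
  extremal_SdS_W_blowup_rate_general m hm
end
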